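/- arXiv:2201.04607 — 10 statements merged into one kernel-verified Lean document; each statement's English description precedes it below -/
import Mathlib

section
/- In a free metabelian Poisson algebra (i.e., a Poisson algebra satisfying the metabelian identities), the identities [a,b,c]·d = −[a,b,d]·c and [a,b,c]·c = 0 hold for all elements a,b,c,d. -/
theorem stmt8 {K P : Type*} [Field K] [CharZero K] [NonUnitalCommRing P] [Module K P]
    (l : P → P → P)
    (laddl : ∀ a b c : P, l (a + b) c = l a c + l b c)
    (laddr : ∀ a b c : P, l a (b + c) = l a b + l a c)
    (lskew : ∀ a b : P, l a b = - l b a)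
    (ljac : ∀ a b c : P, l (l a b) c + l (l b c) a + l (l c a) b = 0)
    (leib : ∀ a b c : P, l a (b * c) = l a b * c + b * l a c)
    (m1 : ∀ a b c d : P, a * b * c * d = 0)
    (m2 : ∀ a b c d : P, l (a * b) (c * d) = 0)
    (m3 : ∀ a b c d : P, l (l a b) (c * d) = 0)
    (m4 : ∀ a b c d : P, l a b * c * d = 0)
    (m5 : ∀ a b c d : P, l a b * l c d = 0)
    (m6 : ∀ a b c d : P, l (l a b) (l c d) = 0)
    (a b c d : P) :
    l (l a b) c * d = - (l (l a b) d * c) ∧ l (l a b) c * c = 0 := by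
  have key : ∀ c d : P, l (l a b) c * d = - (l (l a b) d * c) := by
    intro c d
    have h := leib (l a b) c d
    rw [m3, mul_comm c (l (l a b) d)] at h
    exact eq_neg_of_add_eq_zero_left h.symm
  refine ⟨key c d, ?_⟩
  have h := key c c
  have h2 : (2 : K) • (l (l a b) c * c) = 0 := by
    rw [two_smul]; nth_rewrite 1 [h]; exact neg_add_cancel _
  have h2' := congrArg (fun x => (2 : K)⁻¹ • x) h2
  simpa [smul_smul, inv_mul_cancel₀ (two_ne_zero (α := K))] using h2'
end

section
/- In a metabelian Poisson algebra, the identity [a,b,c]·d = [d,b,c]·a − [c,b,d]·a holds for all a,b,c,d. -/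
theorem stmt9 {K P : Type*} [Field K] [CharZero K] [NonUnitalCommRing P] [Module K P]
    (l : P → P → P)
    (laddl : ∀ a b c : P, l (a + b) c = l a c + l b c)
    (laddr : ∀ a b c : P, l a (b + c) = l a b + l a c)
    (lskew : ∀ a b : P, l a b = - l b a)
    (ljac : ∀ a b c : P, l (l a b) c + l (l b c) a + l (l c a) b = 0)
    (leib : ∀ a b c : P, l a (b * c) = l a b * c + b * l a c)
    (m1 : ∀ a b c d : P, a * b * c * d = 0)
    (m2 : ∀ a b c d : P, l (a * b) (c * d) = 0)
    (m3 : ∀ a b c d : P, l (l a b) (c * d) = 0)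
    (m4 : ∀ a b c d : P, l a b * c * d = 0)
    (m5 : ∀ a b c d : P, l a b * l c d = 0)
    (m6 : ∀ a b c d : P, l (l a b) (l c d) = 0)
    (a b c d : P) :
    l (l a b) c * d = l (l d b) c * a - l (l c b) d * a := by
  -- l 0 y = 0
  have lzero1 : ∀ y : P, l 0 y = 0 := by
    intro y
    have h : l 0 y + 0 = l 0 y + l 0 y := by
      have h0 := laddl 0 0 y
      rw [zero_add] at h0
      rw [add_zero]
      exact h0
    exact (add_left_cancel h).symm
  -- l (-x) y = - l x y
  have lneg1 : ∀ x y : P, l (-x) y = - l x y := by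
    intro x y
    have h := laddl x (-x) y
    rw [add_neg_cancel, lzero1] at h
    exact eq_neg_of_add_eq_zero_right h.symm
  -- l (l x y * z) w = l (l x y) w * z
  have hA : ∀ x y z w : P, l (l x y * z) w = l (l x y) w * z := by
    intro x y z w
    rw [lskew (l x y * z) w, leib w (l x y) z, m5, add_zero, lskew w (l x y),
      neg_mul, neg_neg]
  -- l (z * l x y) w = l (l x y) w * z
  have hB : ∀ x y z w : P, l (z * l x y) w = l (l x y) w * z := by
    intro x y z w
    rw [mul_comm z (l x y), hA]
  -- relation (3): T(x,y,z,w) + T(x,y,w,z) = 0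
  have hT3 : ∀ x y z w : P, l (l x y) z * w + l (l x y) w * z = 0 := by
    intro x y z w
    have h := m3 x y z w
    rw [leib (l x y) z w, mul_comm z (l (l x y) w)] at h
    exact h
  -- relation (1): T(x,y,z,w) + T(y,x,z,w) = 0
  have hT1 : ∀ x y z w : P, l (l x y) z * w + l (l y x) z * w = 0 := by
    intro x y z w
    rw [lskew x y, lneg1, neg_mul]
    exact neg_add_cancel _
  -- relation (2): Jacobi times w
  have hjacm : ∀ x y z w : P,
      l (l x y) z * w + l (l y z) x * w + l (l z x) y * w = 0 := by
    intro x y z w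
    have h := ljac x y z
    calc l (l x y) z * w + l (l y z) x * w + l (l z x) y * w
        = (l (l x y) z + l (l y z) x + l (l z x) y) * w := by
          rw [add_mul, add_mul]
      _ = 0 := by rw [h, zero_mul]
  -- relation (5): from expanding l (l a (b*c)) d two ways
  have h5 : ∀ a b c d : P,
      l (l a b) d * c + l (l a c) d * b = l (l d b) a * c + l (l d c) a * b := by
    intro a b c d
    have e1 : l (l a (b * c)) d = l (l a b) d * c + l (l a c) d * b := by
      rw [leib a b c, laddl, hA, hB]
    have e2 : l (l (b * c) d) a = -(l (l d b) a * c + l (l d c) a * b) := by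
      rw [lskew (b * c) d, lneg1, leib d b c, laddl, hA, hB]
    have e3 := ljac a (b * c) d
    rw [m3, add_zero, e1, e2] at e3
    exact eq_of_sub_eq_zero (by rw [sub_eq_add_neg]; exact e3)
  -- assemble: twice the goal
  have key : l (l a b) c * d + l (l a b) c * d
      = (l (l d b) c * a - l (l c b) d * a) +
        (l (l d b) c * a - l (l c b) d * a) := by
    have E5 := h5 a b c d
    have t1 := hT3 a b c d
    have t2 := hT3 a c b d
    have t3 := hT3 d b a c
    have t4 := hT3 d c a b
    have j1 := hjacm a c b d
    have j2 := hjacm d c b a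
    have p1 := hT1 b a c d
    have p2 := hT1 b d c a
    have t5 := hT3 c b a d
    linear_combination (norm := abel1) -E5 + t1 + t2 - t3 - t4 - j1 + j2 + p1 - p2 + t5
  have h2 : (2 : K) • (l (l a b) c * d)
      = (2 : K) • (l (l d b) c * a - l (l c b) d * a) := by
    rw [two_smul, two_smul]
    exact key
  calc l (l a b) c * d = (2 : K)⁻¹ • ((2 : K) • (l (l a b) c * d)) :=
        (inv_smul_smul₀ two_ne_zero _).symm
    _ = (2 : K)⁻¹ • ((2 : K) • (l (l d b) c * a - l (l c b) d * a)) := by rw [h2]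
    _ = l (l d b) c * a - l (l c b) d * a := inv_smul_smul₀ two_ne_zero _
end

section
/- In a metabelian Poisson algebra, the identity [a,b,c,d] = [a,b,d,c] holds for all a,b,c,d, where brackets are left normed. -/
theorem stmt10 {K P : Type*} [Field K] [CharZero K] [NonUnitalCommRing P] [Module K P]
    (l : P → P → P)
    (laddl : ∀ a b c : P, l (a + b) c = l a c + l b c)
    (laddr : ∀ a b c : P, l a (b + c) = l a b + l a c)
    (lskew : ∀ a b : P, l a b = - l b a)
    (ljac : ∀ a b c : P, l (l a b) c + l (l b c) a + l (l c a) b = 0)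
    (leib : ∀ a b c : P, l a (b * c) = l a b * c + b * l a c)
    (m1 : ∀ a b c d : P, a * b * c * d = 0)
    (m2 : ∀ a b c d : P, l (a * b) (c * d) = 0)
    (m3 : ∀ a b c d : P, l (l a b) (c * d) = 0)
    (m4 : ∀ a b c d : P, l a b * c * d = 0)
    (m5 : ∀ a b c d : P, l a b * l c d = 0)
    (m6 : ∀ a b c d : P, l (l a b) (l c d) = 0)
    (a b c d : P) :
    l (l (l a b) c) d = l (l (l a b) d) c := by
  have hzero : ∀ c : P, l 0 c = 0 := by
    intro c
    have h := laddl 0 0 c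
    simpa using h.symm
  have hneg : ∀ y c : P, l (-y) c = - l y c := by
    intro y c
    have h := laddl y (-y) c
    rw [add_neg_cancel, hzero] at h
    exact eq_neg_of_add_eq_zero_right h.symm
  have hj := ljac (l a b) c d
  have h6 := m6 c d a b
  rw [h6] at hj
  have hd : l (l d (l a b)) c = - l (l (l a b) d) c := by
    rw [lskew d (l a b), hneg]
  rw [hd] at hj
  rw [add_zero] at hj
  exact eq_of_sub_eq_zero (by rwa [sub_eq_add_neg])
end

section
/- Let δ be the derivation of a metabelian Poisson algebra generated by x_1,...,x_n,y_1,...,y_n with δ(y_i)=x_i, δ(x_i)=0. Then for j<i<k the elements [x_i,x_j]·y_k + [y_j,x_i]·x_k and [y_i,x_j]·x_k + [y_j,x_i]·x_k are constants of δ. -/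
theorem stmt12 {K P : Type*} [Field K] [CharZero K] [NonUnitalCommRing P] [Module K P]
    (l : P → P → P)
    (laddl : ∀ a b c : P, l (a + b) c = l a c + l b c)
    (laddr : ∀ a b c : P, l a (b + c) = l a b + l a c)
    (lskew : ∀ a b : P, l a b = - l b a)
    (ljac : ∀ a b c : P, l (l a b) c + l (l b c) a + l (l c a) b = 0)
    (leib : ∀ a b c : P, l a (b * c) = l a b * c + b * l a c)
    (m1 : ∀ a b c d : P, a * b * c * d = 0)
    (m2 : ∀ a b c d : P, l (a * b) (c * d) = 0)
    (m3 : ∀ a b c d : P, l (l a b) (c * d) = 0)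
    (m4 : ∀ a b c d : P, l a b * c * d = 0)
    (m5 : ∀ a b c d : P, l a b * l c d = 0)
    (m6 : ∀ a b c d : P, l (l a b) (l c d) = 0)
    (n : ℕ) (δ : P → P)
    (dadd : ∀ a b : P, δ (a + b) = δ a + δ b)
    (dmul : ∀ a b : P, δ (a * b) = δ a * b + a * δ b)
    (dlie : ∀ a b : P, δ (l a b) = l (δ a) b + l a (δ b))
    (x y : Fin n → P)
    (hx : ∀ i, δ (x i) = 0) (hy : ∀ i, δ (y i) = x i)
    (i j k : Fin n) (hji : j < i) (hik : i < k) :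
    δ (l (x i) (x j) * y k + l (y j) (x i) * x k) = 0 ∧ δ (l (y i) (x j) * x k + l (y j) (x i) * x k) = 0 := by
  have l0r : ∀ a : P, l a 0 = 0 := by
    intro a
    have h := laddr a 0 0
    simpa using h
  have l0l : ∀ a : P, l 0 a = 0 := by
    intro a
    rw [lskew, l0r, neg_zero]
  have key : ∀ a b : P, δ (l a b) = l (δ a) b + l a (δ b) := dlie
  constructor
  · rw [dadd, dmul, dmul, dlie, dlie, hx, hx, hy, hy, hx, lskew (x j) (x i)]
    simp only [l0r, l0l]
    simp only [zero_mul, mul_zero, add_zero, zero_add, neg_mul]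
    abel
  · rw [dadd, dmul, dmul, dlie, dlie, hx, hx, hy, hy, hx, lskew (x j) (x i)]
    simp only [l0r, l0l]
    simp only [zero_mul, mul_zero, add_zero, zero_add, neg_mul]
    abel
end

section
/- Let δ be the derivation of a metabelian Poisson algebra generated by x_1,...,x_n,y_1,...,y_n with δ(y_i)=x_i, δ(x_i)=0. Then for j<i the elements [x_i,x_j,x_j]·y_j, [x_i,x_j,x_i]·y_i, and [x_i,x_j,x_i]·y_j + [x_i,x_j,x_j]·y_i are constants of δ. -/
theorem stmt13 {K P : Type*} [Field K] [CharZero K] [NonUnitalCommRing P] [Module K P]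
    (l : P → P → P)
    (laddl : ∀ a b c : P, l (a + b) c = l a c + l b c)
    (laddr : ∀ a b c : P, l a (b + c) = l a b + l a c)
    (lskew : ∀ a b : P, l a b = - l b a)
    (ljac : ∀ a b c : P, l (l a b) c + l (l b c) a + l (l c a) b = 0)
    (leib : ∀ a b c : P, l a (b * c) = l a b * c + b * l a c)
    (m1 : ∀ a b c d : P, a * b * c * d = 0)
    (m2 : ∀ a b c d : P, l (a * b) (c * d) = 0)
    (m3 : ∀ a b c d : P, l (l a b) (c * d) = 0)
    (m4 : ∀ a b c d : P, l a b * c * d = 0)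
    (m5 : ∀ a b c d : P, l a b * l c d = 0)
    (m6 : ∀ a b c d : P, l (l a b) (l c d) = 0)
    (n : ℕ) (δ : P → P)
    (dadd : ∀ a b : P, δ (a + b) = δ a + δ b)
    (dmul : ∀ a b : P, δ (a * b) = δ a * b + a * δ b)
    (dlie : ∀ a b : P, δ (l a b) = l (δ a) b + l a (δ b))
    (x y : Fin n → P)
    (hx : ∀ i, δ (x i) = 0) (hy : ∀ i, δ (y i) = x i)
    (i j : Fin n) (hji : j < i) :
    δ (l (l (x i) (x j)) (x j) * y j) = 0 ∧ δ (l (l (x i) (x j)) (x i) * y i) = 0 ∧ δ (l (l (x i) (x j)) (x i) * y j + l (l (x i) (x j)) (x j) * y i) = 0 := by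
  -- divisibility by 2
  have half : ∀ p : P, p + p = 0 → p = 0 := by
    intro p hp
    have h2 : (2 : K) • p = 0 := by rw [two_smul]; exact hp
    have h3 := congrArg (fun q => (2 : K)⁻¹ • q) h2
    simpa [smul_smul, inv_mul_cancel₀ (two_ne_zero : (2:K) ≠ 0)] using h3
  have lzr : ∀ a : P, l a 0 = 0 := fun a => by
    have h := laddr a 0 0; rw [add_zero] at h; exact (left_eq_add.mp h)
  have lzl : ∀ a : P, l 0 a = 0 := fun a => by
    have h := laddl 0 0 a; rw [add_zero] at h; exact (left_eq_add.mp h)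
  -- δ kills the Lie words in x
  have dxx : δ (l (x i) (x j)) = 0 := by
    rw [dlie, hx, hx, lzr, lzl, add_zero]
  have dt : ∀ k, δ (l (l (x i) (x j)) (x k)) = 0 := fun k => by
    rw [dlie, dxx, hx, lzr, lzl, add_zero]
  -- key products from m3 + Leibniz
  have key : ∀ a b : P, l (l (x i) (x j)) a * b + l (l (x i) (x j)) b * a = 0 := by
    intro a b
    have h := leib (l (x i) (x j)) a b
    rw [m3] at h
    have : l (l (x i) (x j)) a * b + a * l (l (x i) (x j)) b = 0 := h.symm
    rw [mul_comm a] at this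
    exact this
  constructor
  · rw [dmul, dt, hy, zero_mul, zero_add]
    exact half _ (key (x j) (x j))
  constructor
  · rw [dmul, dt, hy, zero_mul, zero_add]
    exact half _ (key (x i) (x i))
  · rw [dadd, dmul, dmul, dt, dt, hy, hy, zero_mul, zero_mul, zero_add, zero_add]
    exact key (x i) (x j)
end

section
/- Let δ be the derivation of a metabelian Poisson algebra generated by x_1,...,x_n,y_1,...,y_n with δ(y_i)=x_i, δ(x_i)=0. Then for j<i<k<l the element [x_k,x_j,x_l]·y_i + [x_i,x_j,x_k]·y_l − [x_k,x_i,x_l]·y_j is a constant of δ. -/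
theorem stmt14 {K P : Type*} [Field K] [CharZero K] [NonUnitalCommRing P] [Module K P]
    (l : P → P → P)
    (laddl : ∀ a b c : P, l (a + b) c = l a c + l b c)
    (laddr : ∀ a b c : P, l a (b + c) = l a b + l a c)
    (lskew : ∀ a b : P, l a b = - l b a)
    (ljac : ∀ a b c : P, l (l a b) c + l (l b c) a + l (l c a) b = 0)
    (leib : ∀ a b c : P, l a (b * c) = l a b * c + b * l a c)
    (m1 : ∀ a b c d : P, a * b * c * d = 0)
    (m2 : ∀ a b c d : P, l (a * b) (c * d) = 0)
    (m3 : ∀ a b c d : P, l (l a b) (c * d) = 0)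
    (m4 : ∀ a b c d : P, l a b * c * d = 0)
    (m5 : ∀ a b c d : P, l a b * l c d = 0)
    (m6 : ∀ a b c d : P, l (l a b) (l c d) = 0)
    (n : ℕ) (δ : P → P)
    (dadd : ∀ a b : P, δ (a + b) = δ a + δ b)
    (dmul : ∀ a b : P, δ (a * b) = δ a * b + a * δ b)
    (dlie : ∀ a b : P, δ (l a b) = l (δ a) b + l a (δ b))
    (x y : Fin n → P)
    (hx : ∀ i, δ (x i) = 0) (hy : ∀ i, δ (y i) = x i)
    (i j k m : Fin n) (hji : j < i) (hik : i < k) (hkm : k < m) :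
    δ (l (l (x k) (x j)) (x m) * y i + l (l (x i) (x j)) (x k) * y m - l (l (x k) (x i)) (x m) * y j) = 0 := by
  -- basic consequences
  have d0 : δ 0 = 0 := by
    have h := dadd 0 0
    rw [add_zero] at h
    have h2 : δ 0 + δ 0 = δ 0 + 0 := by rw [add_zero]; exact h.symm
    exact add_left_cancel h2
  have dneg : ∀ a : P, δ (-a) = - δ a := by
    intro a
    have h := dadd a (-a)
    rw [add_neg_cancel, d0] at h
    exact (neg_eq_of_add_eq_zero_right h.symm).symm
  have dsub : ∀ a b : P, δ (a - b) = δ a - δ b := by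
    intro a b
    rw [sub_eq_add_neg, dadd, dneg, sub_eq_add_neg]
  have l0l : ∀ a : P, l 0 a = 0 := by
    intro a
    have h := laddl 0 0 a
    rw [add_zero] at h
    have h2 : l 0 a + l 0 a = l 0 a + 0 := by rw [add_zero]; exact h.symm
    exact add_left_cancel h2
  have l0r : ∀ a : P, l a 0 = 0 := by
    intro a
    have h := laddr a 0 0
    rw [add_zero] at h
    have h2 : l a 0 + l a 0 = l a 0 + 0 := by rw [add_zero]; exact h.symm
    exact add_left_cancel h2
  have lnegl : ∀ u b : P, l (-u) b = - l u b := by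
    intro u b
    have h := laddl u (-u) b
    rw [add_neg_cancel, l0l] at h
    exact (neg_eq_of_add_eq_zero_right h.symm).symm
  -- swap last two arguments with a sign
  have swap : ∀ a b c d : P, l (l a b) c * d = -(l (l a b) d * c) := by
    intro a b c d
    have h := m3 a b c d
    rw [leib] at h
    have := eq_neg_of_add_eq_zero_left h
    rw [this, mul_comm]
  -- key Lie identity
  have lie3 : ∀ a b c : P,
      - l (l c a) b + l (l b a) c + l (l c b) a = 0 := by
    intro a b c
    have h1 := ljac c b a
    have hneg : l (l a c) b = - l (l c a) b := by
      rw [lskew a c, lnegl]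
    rw [hneg] at h1
    have := h1
    abel_nf at this ⊢
    linear_combination (norm := abel) this
  -- differentiate
  simp only [dsub, dadd, dmul, dlie, hx, hy, l0l, l0r, zero_add, add_zero, zero_mul]
  -- now pure Lie/product identity
  rw [swap (x k) (x j) (x m) (x i), swap (x k) (x i) (x m) (x j)]
  have key := lie3 (x j) (x i) (x k)
  have h2 := congrArg (· * x m) key
  simp only [add_mul, neg_mul, zero_mul] at h2
  linear_combination (norm := abel) h2
end

section
/- Let δ be the derivation of a metabelian Poisson algebra generated by x_1,...,x_n,y_1,...,y_n with δ(y_i)=x_i, δ(x_i)=0. Then for j<i the elements [y_i,x_i,x_i]·y_i and [y_j,x_j,x_i]·y_i are constants of δ. -/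
theorem stmt15 {K P : Type*} [Field K] [CharZero K] [NonUnitalCommRing P] [Module K P]
    (l : P → P → P)
    (laddl : ∀ a b c : P, l (a + b) c = l a c + l b c)
    (laddr : ∀ a b c : P, l a (b + c) = l a b + l a c)
    (lskew : ∀ a b : P, l a b = - l b a)
    (ljac : ∀ a b c : P, l (l a b) c + l (l b c) a + l (l c a) b = 0)
    (leib : ∀ a b c : P, l a (b * c) = l a b * c + b * l a c)
    (m1 : ∀ a b c d : P, a * b * c * d = 0)
    (m2 : ∀ a b c d : P, l (a * b) (c * d) = 0)
    (m3 : ∀ a b c d : P, l (l a b) (c * d) = 0)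
    (m4 : ∀ a b c d : P, l a b * c * d = 0)
    (m5 : ∀ a b c d : P, l a b * l c d = 0)
    (m6 : ∀ a b c d : P, l (l a b) (l c d) = 0)
    (n : ℕ) (δ : P → P)
    (dadd : ∀ a b : P, δ (a + b) = δ a + δ b)
    (dmul : ∀ a b : P, δ (a * b) = δ a * b + a * δ b)
    (dlie : ∀ a b : P, δ (l a b) = l (δ a) b + l a (δ b))
    (x y : Fin n → P)
    (hx : ∀ i, δ (x i) = 0) (hy : ∀ i, δ (y i) = x i)
    (i j : Fin n) (hji : j < i) :
    δ (l (l (y i) (x i)) (x i) * y i) = 0 ∧ δ (l (l (y j) (x j)) (x i) * y i) = 0 := by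
  -- P is torsion-free over K, so u + u = 0 implies u = 0
  have half : ∀ u : P, u + u = 0 → u = 0 := by
    intro u h
    have h2 : (2 : K) • u = 0 := by rw [two_smul]; exact h
    calc u = (2 : K)⁻¹ • ((2 : K) • u) := (inv_smul_smul₀ two_ne_zero u).symm
      _ = 0 := by rw [h2, smul_zero]
  have l0r : ∀ a : P, l a 0 = 0 := by
    intro a
    have h := laddr a 0 0
    rw [add_zero] at h
    have h2 : l a 0 + 0 = l a 0 + l a 0 := by rw [add_zero]; exact h
    exact (add_left_cancel h2).symm
  have laa : ∀ a : P, l a a = 0 := by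
    intro a
    refine half _ ?_
    nth_rewrite 2 [lskew a a]
    exact add_neg_cancel _
  have l0l : ∀ a : P, l 0 a = 0 := by
    intro a
    rw [lskew, l0r, neg_zero]
  -- key: [[a,b],c]·c = 0
  have key : ∀ a b c : P, l (l a b) c * c = 0 := by
    intro a b c
    refine half _ ?_
    have h := leib (l a b) c c
    rw [m3, mul_comm c (l (l a b) c)] at h
    exact h.symm
  -- δ of the bracket factors vanishes
  have dA1 : δ (l (l (y i) (x i)) (x i)) = 0 := by
    simp only [dlie, hx, hy, laa, l0r, l0l, zero_add, add_zero]
  have dA2 : δ (l (l (y j) (x j)) (x i)) = 0 := by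
    simp only [dlie, hx, hy, laa, l0r, l0l, zero_add, add_zero]
  constructor
  · rw [dmul, dA1, hy, zero_mul, zero_add]
    exact key _ _ _
  · rw [dmul, dA2, hy, zero_mul, zero_add]
    exact key _ _ _
end

section
/- Let δ be the derivation of a metabelian Poisson algebra generated by x_1,...,x_n,y_1,...,y_n with δ(y_i)=x_i, δ(x_i)=0. Then for j<i the element [y_j,x_i,x_i]·y_j − 2[x_i,x_j,y_j]·y_i + [y_i,x_j,x_j]·y_i is a constant of δ. -/
theorem stmt16 {K P : Type*} [Field K] [CharZero K] [NonUnitalCommRing P] [Module K P]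
    (l : P → P → P)
    (laddl : ∀ a b c : P, l (a + b) c = l a c + l b c)
    (laddr : ∀ a b c : P, l a (b + c) = l a b + l a c)
    (lskew : ∀ a b : P, l a b = - l b a)
    (ljac : ∀ a b c : P, l (l a b) c + l (l b c) a + l (l c a) b = 0)
    (leib : ∀ a b c : P, l a (b * c) = l a b * c + b * l a c)
    (m1 : ∀ a b c d : P, a * b * c * d = 0)
    (m2 : ∀ a b c d : P, l (a * b) (c * d) = 0)
    (m3 : ∀ a b c d : P, l (l a b) (c * d) = 0)
    (m4 : ∀ a b c d : P, l a b * c * d = 0)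
    (m5 : ∀ a b c d : P, l a b * l c d = 0)
    (m6 : ∀ a b c d : P, l (l a b) (l c d) = 0)
    (n : ℕ) (δ : P → P)
    (dadd : ∀ a b : P, δ (a + b) = δ a + δ b)
    (dmul : ∀ a b : P, δ (a * b) = δ a * b + a * δ b)
    (dlie : ∀ a b : P, δ (l a b) = l (δ a) b + l a (δ b))
    (x y : Fin n → P)
    (hx : ∀ i, δ (x i) = 0) (hy : ∀ i, δ (y i) = x i)
    (i j : Fin n) (hji : j < i) :
    δ (l (l (y j) (x i)) (x i) * y j - (2 : ℤ) • (l (l (x i) (x j)) (y j) * y i) + l (l (y i) (x j)) (x j) * y i) = 0 := by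
  -- basic lemmas about l
  have lzr : ∀ a : P, l a 0 = 0 := by
    intro a
    have h := laddr a 0 0
    rw [add_zero] at h
    exact (left_eq_add.mp h)
  have lzl : ∀ a : P, l 0 a = 0 := by
    intro a; rw [lskew, lzr, neg_zero]
  have lnl : ∀ a b : P, l (-a) b = - l a b := by
    intro a b
    have h := laddl a (-a) b
    rw [add_neg_cancel, lzl] at h
    exact eq_neg_of_add_eq_zero_right h.symm
  -- δ basics
  have dzero : δ (0 : P) = 0 := by
    have h := dadd 0 0
    rw [add_zero] at h
    exact (left_eq_add.mp h)
  have dneg : ∀ a : P, δ (-a) = - δ a := by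
    intro a
    have h := dadd a (-a)
    rw [add_neg_cancel, dzero] at h
    exact eq_neg_of_add_eq_zero_right h.symm
  -- swap lemma : [[a,b],c]·d = -([[a,b],d]·c)
  have swap : ∀ a b c d : P, l (l a b) c * d = -(l (l a b) d * c) := by
    intro a b c d
    have h := leib (l a b) c d
    rw [m3, mul_comm c (l (l a b) d)] at h
    exact eq_neg_of_add_eq_zero_left h.symm
  -- square lemma : [[a,b],c]·c = 0 (char 0)
  have sq : ∀ a b c : P, l (l a b) c * c = 0 := by
    intro a b c
    have h2 : (2 : K) • (l (l a b) c * c) = 0 := by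
      rw [two_smul]
      nth_rewrite 1 [swap a b c c]
      exact neg_add_cancel _
    have h3 := congrArg (fun z => (2 : K)⁻¹ • z) h2
    simpa [smul_smul, inv_mul_cancel₀ (two_ne_zero (α := K))] using h3
  -- atoms
  set P1 := l (l (x i) (x j)) (x i) * y j with hP1
  set R := l (l (y i) (x j)) (x j) * x i with hR
  -- key identities
  have h1 : l (l (x j) (x i)) (x i) * y j = -P1 := by
    rw [lskew (x j) (x i), lnl, neg_mul, hP1]
  have h3 : l (l (x i) (x j)) (y j) * x i = -P1 := by
    rw [swap (x i) (x j) (y j) (x i), hP1]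
  have h2 : l (l (y j) (x i)) (x i) * x j = -P1 := by
    have jac := ljac (y j) (x i) (x j)
    rw [add_assoc] at jac
    have e := eq_neg_of_add_eq_zero_left jac
    rw [swap (y j) (x i) (x i) (x j), e, neg_mul, neg_neg, add_mul, h3, sq, add_zero]
  have h4 : l (l (x i) (x j)) (x j) * y i = R := by
    have jac := ljac (x i) (x j) (y i)
    rw [add_assoc] at jac
    have e := eq_neg_of_add_eq_zero_left jac
    rw [swap (x i) (x j) (x j) (y i), e, neg_mul, neg_neg, add_mul, sq, add_zero,
        lskew (x j) (y i), lnl, neg_mul, swap (y i) (x j) (x i) (x j), neg_neg, hR]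
  -- main computation
  rw [two_zsmul, sub_eq_add_neg, dadd, dadd, dneg, dadd]
  simp only [dmul, dlie, hx, hy, lzr, lzl, add_zero, zero_add]
  rw [h1, h2, h3, h4]
  abel
end

section
/- Let F be a unital associative algebra over a field of characteristic zero satisfying the identity [z_1,z_2,z_3]=0 (where [a,b]=ab−ba and [a,b,c]=[[a,b],c]). Then F satisfies the identity [z_1,z_2][z_3,z_4] = −[z_1,z_3][z_2,z_4]. -/
/-- In a unital associative algebra over a field of characteristic zero
satisfying [z₁,z₂,z₃]=0, the identity [z₁,z₂][z₃,z₄] = −[z₁,z₃][z₂,z₄] holds. -/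
theorem stmt17 {K F : Type*} [Field K] [CharZero K] [Ring F] [Algebra K F]
    (h : ∀ a b c : F, ⁅⁅a, b⁆, c⁆ = 0) :
    ∀ z₁ z₂ z₃ z₄ : F, ⁅z₁, z₂⁆ * ⁅z₃, z₄⁆ = - (⁅z₁, z₃⁆ * ⁅z₂, z₄⁆) := by
  simp only [Ring.lie_def] at h ⊢
  -- key identity: [a,d][c,b] + [a,b][c,d] = 0
  have key : ∀ a b c d : F,
      (a*d - d*a) * (c*b - b*c) + (a*b - b*a) * (c*d - d*c) = 0 := by
    intro a b c d
    have h1 := h (a*c) b d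
    have h2 := h c b d
    have h3 := h a b d
    have e : (a*d - d*a) * (c*b - b*c) + (a*b - b*a) * (c*d - d*c)
        = (((a*c)*b - b*(a*c))*d - d*((a*c)*b - b*(a*c)))
          - a*((c*b - b*c)*d - d*(c*b - b*c))
          - ((a*b - b*a)*d - d*(a*b - b*a))*c := by noncomm_ring
    rw [e, h1, h2, h3]
    noncomm_ring
  intro a b c d
  have k1 := key a b c d
  have k2 := key a c b d
  have e2 : (a*d - d*a) * (b*c - c*b) = -((a*d - d*a) * (c*b - b*c)) := by noncomm_ring
  rw [e2] at k2
  linear_combination (norm := abel) k1 + k2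
end

section
/- Let F be a unital associative algebra over a field of characteristic zero satisfying the identity [a,b][c,d]=0 (metabelian identity). Then for any permutations π of {1,...,m} and σ of {1,...,n} and any elements, x_{i_{π(1)}}···x_{i_{π(m)}}[x_i,x_j,x_{j_{σ(1)}},...,x_{j_{σ(n)}}] = x_{i_1}···x_{i_m}[x_i,x_j,x_{j_1},...,x_{j_n}]. -/
section aux

variable {F : Type*} [Ring F]

/-- Two commutators separated by an arbitrary element multiply to zero. -/
lemma comm_mid_comm (h : ∀ a b c d : F, ⁅a, b⁆ * ⁅c, d⁆ = 0) (a b w c d : F) :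
    ⁅a, b⁆ * w * ⁅c, d⁆ = 0 := by
  have hw : w * ⁅c, d⁆ = ⁅w, ⁅c, d⁆⁆ + ⁅c, d⁆ * w := by
    simp [Ring.lie_def]
  calc ⁅a, b⁆ * w * ⁅c, d⁆ = ⁅a, b⁆ * (w * ⁅c, d⁆) := by rw [mul_assoc]
    _ = ⁅a, b⁆ * ⁅w, ⁅c, d⁆⁆ + ⁅a, b⁆ * ⁅c, d⁆ * w := by
        rw [hw, mul_add, mul_assoc]
    _ = 0 := by rw [h, h, zero_mul, add_zero]

/-- Key predicate: `c` kills commutators on both sides, even across a middle factor. -/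
def Kills (c : F) : Prop := ∀ x y w : F, ⁅x, y⁆ * w * c = 0 ∧ c * w * ⁅x, y⁆ = 0

lemma kills_comm (h : ∀ a b c d : F, ⁅a, b⁆ * ⁅c, d⁆ = 0) (u v : F) :
    Kills ⁅u, v⁆ := fun x y w =>
  ⟨comm_mid_comm h x y w u v, comm_mid_comm h u v w x y⟩

lemma Kills.lie {c : F} (hc : Kills c) (b : F) : Kills ⁅c, b⁆ := by
  intro x y w
  constructor
  · have h1 : ⁅x, y⁆ * w * (c * b) = 0 := by
      rw [show ⁅x, y⁆ * w * (c * b) = ⁅x, y⁆ * w * c * b by noncomm_ring,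
        (hc x y w).1, zero_mul]
    have h2 : ⁅x, y⁆ * w * (b * c) = 0 := by
      rw [show ⁅x, y⁆ * w * (b * c) = ⁅x, y⁆ * (w * b) * c by noncomm_ring,
        (hc x y (w * b)).1]
    rw [show (⁅c, b⁆ : F) = c * b - b * c from Ring.lie_def c b, mul_sub, h1, h2, sub_zero]
  · have h1 : c * b * w * ⁅x, y⁆ = 0 := by
      rw [show c * b * w * ⁅x, y⁆ = c * (b * w) * ⁅x, y⁆ by noncomm_ring,
        (hc x y (b * w)).2]
    have h2 : b * c * w * ⁅x, y⁆ = 0 := by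
      rw [show b * c * w * ⁅x, y⁆ = b * (c * w * ⁅x, y⁆) by noncomm_ring,
        (hc x y w).2, mul_zero]
    rw [show (⁅c, b⁆ : F) = c * b - b * c from Ring.lie_def c b, sub_mul, sub_mul, h1, h2,
      sub_zero]

/-- If `c` kills commutators, successive commutations with `c` commute. -/
lemma Kills.lie_lie_comm {c : F} (hc : Kills c) (x y : F) :
    ⁅⁅c, x⁆, y⁆ = ⁅⁅c, y⁆, x⁆ := by
  have h1 : c * ⁅x, y⁆ = 0 := by simpa using (hc x y 1).2
  have h2 : ⁅x, y⁆ * c = 0 := by simpa using (hc x y 1).1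
  have e : ⁅⁅c, x⁆, y⁆ - ⁅⁅c, y⁆, x⁆ = c * ⁅x, y⁆ - ⁅x, y⁆ * c := by
    simp only [Ring.lie_def]
    noncomm_ring
  rw [h1, h2, sub_zero] at e
  exact sub_eq_zero.mp e

lemma Kills.foldl {c : F} (hc : Kills c) (l : List F) :
    Kills (l.foldl (fun p q => ⁅p, q⁆) c) := by
  induction l generalizing c with
  | nil => exact hc
  | cons x l ih => exact ih (hc.lie x)

/-- Prefactors can be permuted in front of an element killing commutators. -/
lemma prod_mul_kills {l₁ l₂ : List F} (p : l₁.Perm l₂) {L : F} (hL : Kills L) :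
    l₁.prod * L = l₂.prod * L := by
  induction p with
  | nil => rfl
  | cons x _ ih =>
      simp only [List.prod_cons, mul_assoc] at ih ⊢
      rw [ih]
  | swap x y l =>
      simp only [List.prod_cons]
      have h0 : ⁅x, y⁆ * l.prod * L = 0 := (hL x y l.prod).1
      have h' : x * y * (l.prod * L) = y * x * (l.prod * L) := by
        apply sub_eq_zero.mp
        rw [← sub_mul, ← Ring.lie_def, ← mul_assoc, h0]
      calc y * (x * l.prod) * L = y * x * (l.prod * L) := by
            rw [mul_assoc, mul_assoc, mul_assoc]
        _ = x * y * (l.prod * L) := h'.symm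
        _ = x * (y * l.prod) * L := by rw [mul_assoc, mul_assoc, mul_assoc]
  | trans _ _ ih1 ih2 => exact ih1.trans ih2

end aux

/-- In a unital associative metabelian algebra ([a,b][c,d]=0) over a field of
characteristic zero, the prefactors of a long left-normed commutator commute, and
the inner entries of the long commutator can be permuted arbitrarily. -/
theorem stmt18 {K F : Type*} [Field K] [CharZero K] [Ring F] [Algebra K F]
    (h : ∀ a b c d : F, ⁅a, b⁆ * ⁅c, d⁆ = 0)
    (m n : ℕ) (a : Fin m → F) (b : Fin n → F) (u v : F)
    (π : Equiv.Perm (Fin m)) (σ : Equiv.Perm (Fin n)) :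
    (List.ofFn (a ∘ π)).prod *
        ((List.ofFn (b ∘ σ)).foldl (fun p q => ⁅p, q⁆) ⁅u, v⁆) =
      (List.ofFn a).prod * ((List.ofFn b).foldl (fun p q => ⁅p, q⁆) ⁅u, v⁆) := by
  -- The subtype of elements killing commutators, where the fold is right-commutative.
  let f : {c : F // Kills c} → F → {c : F // Kills c} := fun c x => ⟨⁅c.1, x⁆, c.2.lie x⟩
  -- the fold stays inside the subtype and agrees with the fold in F
  have key : ∀ (l : List F) (c : {c : F // Kills c}),
      (l.foldl f c).1 = l.foldl (fun p q => ⁅p, q⁆) c.1 := by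
    intro l
    induction l with
    | nil => intro c; rfl
    | cons x l ih => intro c; exact ih (f c x)
  -- inner entries permute
  have hfold : (List.ofFn (b ∘ σ)).foldl (fun p q => ⁅p, q⁆) ⁅u, v⁆ =
      (List.ofFn b).foldl (fun p q => ⁅p, q⁆) ⁅u, v⁆ := by
    have hcomm : ∀ x ∈ List.ofFn (b ∘ σ), ∀ y ∈ List.ofFn (b ∘ σ),
        ∀ z : {c : F // Kills c}, f (f z x) y = f (f z y) x :=
      fun x _ y _ z => Subtype.ext (z.2.lie_lie_comm x y)
    have hs := (σ.ofFn_comp_perm b).foldl_eq' hcomm ⟨⁅u, v⁆, kills_comm h u v⟩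
    have e1 := key (List.ofFn (b ∘ σ)) ⟨⁅u, v⁆, kills_comm h u v⟩
    have e2 := key (List.ofFn b) ⟨⁅u, v⁆, kills_comm h u v⟩
    rw [← e1, ← e2, hs]
  rw [hfold]
  -- prefactors permute
  exact prod_mul_kills (π.ofFn_comp_perm a)
    ((kills_comm h u v).foldl (List.ofFn b))
end
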